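/- Let G be a group, U a finite-dimensional irreducible complex representation of G carrying a G-invariant nondegenerate alternating bilinear form B_U, and let V = U ⊗ ℂ^m with G acting on the first factor. Then every G-invariant bilinear form on V is of the form B_U ⊗ C for a unique bilinear form C on ℂ^m, and B_U ⊗ C is alternating and nondegenerate if and only if C is symmetric and nondegenerate. Consequently, fixing such a C, the centralizer of the image of G inside Sp(V, B_U ⊗ C) is isomorphic to the orthogonal group O(m, ℂ) of (ℂ^m, C). -/

import Mathlib

/-!
By Schur's lemma, a `G`-invariant form on `U` is a multiple of `B_U` (compose it with the
inverse of `B_U : U ≃ U*`), and a `G`-equivariant map `U → U ⊗ ℂ^m` is `u ↦ u ⊗ a`, since each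
coordinate is a scalar. Restricting an invariant form on `U ⊗ W` to `(U ⊗ w) × (U ⊗ w')` thus
gives `c(w, w') • B_U`, and `c` is the form `C`. As `B_U` is skew, `B_U ⊗ C` is alternating
exactly when `C` is symmetric, and it is nondegenerate exactly when `C` is, because
`U* ⊗ W* ≅ (U ⊗ W)*`. An automorphism commuting with `G` sends `u ⊗ w` to `u ⊗ A w`, so the
centralizer is `{id ⊗ A}`, and `id ⊗ A` preserves `B_U ⊗ C` iff `A` preserves `C`.
-/

open TensorProduct

def formPreserver {M : Type} [AddCommGroup M] [Module ℂ M]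
    (B : LinearMap.BilinForm ℂ M) : Subgroup (M ≃ₗ[ℂ] M) where
  carrier := {g | ∀ x y : M, B (g x) (g y) = B x y}
  one_mem' := by intro x y; rfl
  mul_mem' := by
    intro a b ha hb x y
    have h1 : (a * b) x = a (b x) := rfl
    have h2 : (a * b) y = a (b y) := rfl
    rw [h1, h2, ha, hb]
  inv_mem' := by
    intro a ha x y
    have h := ha (a⁻¹ x) (a⁻¹ y)
    have e1 : a (a⁻¹ x) = x := a.apply_symm_apply x
    have e2 : a (a⁻¹ y) = y := a.apply_symm_apply y
    rw [e1, e2] at h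
    exact h.symm

def commutant {M : Type} [AddCommGroup M] [Module ℂ M] {G : Type}
    (ρ : G → (M →ₗ[ℂ] M)) : Subgroup (M ≃ₗ[ℂ] M) where
  carrier := {g | ∀ (h : G) (x : M), g (ρ h x) = ρ h (g x)}
  one_mem' := by intro h x; rfl
  mul_mem' := by
    intro a b ha hb h x
    have h1 : (a * b) (ρ h x) = a (b (ρ h x)) := rfl
    have h2 : (a * b) x = a (b x) := rfl
    rw [h1, h2, hb, ha]
  inv_mem' := by
    intro a ha h x
    have e1 : a (a⁻¹ x) = x := a.apply_symm_apply x
    have key : a (ρ h (a⁻¹ x)) = ρ h x := by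
      rw [ha h (a⁻¹ x), e1]
    have e2 : a⁻¹ (a (ρ h (a⁻¹ x))) = ρ h (a⁻¹ x) :=
      a.symm_apply_apply _
    rw [← key, e2]

def IsIrreducibleRep {G : Type} [Group G] {U : Type} [AddCommGroup U] [Module ℂ U]
    (ρ : Representation ℂ G U) : Prop :=
  Nontrivial U ∧
    ∀ W : Submodule ℂ U, (∀ g : G, ∀ u ∈ W, ρ g u ∈ W) → W = ⊥ ∨ W = ⊤

open LinearMap (BilinForm)

theorem TensorProduct.eq_zero_of_tmul_eq_zero {K M N : Type*} [Field K] [AddCommGroup M]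
    [Module K M] [AddCommGroup N] [Module K N] {m : M} {n : N} (hm : m ≠ 0)
    (h : m ⊗ₜ[K] n = 0) : n = 0 := by
  obtain ⟨f, hf⟩ := Module.Projective.exists_dual_eq_one K hm
  simpa [hf] using congrArg (fun x => TensorProduct.lid K N (f.rTensor N x)) h

theorem TensorProduct.piScalarRight_rTensor {R M : Type*} [CommSemiring R] [AddCommMonoid M]
    [Module R M] {ι : Type*} [Fintype ι] [DecidableEq ι] (f : M →ₗ[R] M)
    (x : M ⊗[R] (ι → R)) (i : ι) :
    piScalarRight R R M ι (f.rTensor (ι → R) x) i = f (piScalarRight R R M ι x i) := by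
  induction x using TensorProduct.induction_on with
  | zero => simp
  | tmul m a => simp
  | add x y hx hy => simp_all

namespace LinearMap.BilinForm

section CommSemiring

variable {R M N : Type*} [CommSemiring R] [AddCommMonoid M] [Module R M] [AddCommMonoid N]
  [Module R N]

@[simp]
theorem tmul_apply_tmul (B₁ : BilinForm R M) (B₂ : BilinForm R N) (m m' : M) (n n' : N) :
    B₁.tmul B₂ (m ⊗ₜ n) (m' ⊗ₜ n') = B₁ m m' * B₂ n n' :=
  (smul_eq_mul _ _).trans (mul_comm _ _)

theorem flip_tmul (B₁ : BilinForm R M) (B₂ : BilinForm R N) :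
    (B₁.tmul B₂).flip = B₁.flip.tmul B₂.flip := by
  ext m n m' n'
  simp

theorem tmul_compl₁₂_lTensor (B₁ : BilinForm R M) (B₂ : BilinForm R N) (f f' : N →ₗ[R] N) :
    (B₁.tmul B₂).compl₁₂ (f.lTensor M) (f'.lTensor M) = B₁.tmul (B₂.compl₁₂ f f') := by
  ext m n m' n'
  simp

end CommSemiring

variable {K M N : Type*} [Field K] [AddCommGroup M] [Module K M] [AddCommGroup N] [Module K N]
  {B₁ : BilinForm K M} {B₂ : BilinForm K N}

theorem exists_apply_ne_zero (h : B₁ ≠ 0) : ∃ m m', B₁ m m' ≠ 0 := by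
  by_contra! h'
  exact h (LinearMap.ext₂ h')

theorem tmul_right_injective (hB₁ : B₁ ≠ 0) :
    Function.Injective (B₁.tmul : BilinForm K N → BilinForm K (M ⊗[K] N)) := by
  obtain ⟨m, m', hm⟩ := exists_apply_ne_zero hB₁
  intro B₂ B₂' h
  ext n n'
  simpa [hm] using congr($h (m ⊗ₜ n) (m' ⊗ₜ n'))

theorem tmul_isAlt_iff [CharZero K] (hB₁ : B₁.IsAlt) (hne : B₁ ≠ 0) :
    (B₁.tmul B₂).IsAlt ↔ B₂.IsSymm := by
  obtain ⟨m, m', hm⟩ := exists_apply_ne_zero hne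
  constructor
  · refine fun h => ⟨fun n n' => ?_⟩
    have := h.neg (m ⊗ₜ n) (m' ⊗ₜ n')
    rw [tmul_apply_tmul, tmul_apply_tmul, ← hB₁.neg_eq m m', neg_mul, neg_inj] at this
    exact mul_left_cancel₀ hm this
  · intro h
    rw [LinearMap.isAlt_iff_eq_neg_flip]
    ext m n m' n'
    simp [← hB₁.neg_eq m' m, h.eq n n']

theorem separatingLeft_tmul [FiniteDimensional K M] [FiniteDimensional K N]
    (h₁ : B₁.Nondegenerate) (h₂ : B₂.Nondegenerate) : (B₁.tmul B₂).SeparatingLeft := by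
  have : (B₁.tmul B₂ : M ⊗[K] N →ₗ[K] Module.Dual K (M ⊗[K] N)) =
      ((TensorProduct.congr (B₁.toDual h₁) (B₂.toDual h₂)).trans
        (dualDistribEquiv K M N)).toLinearMap := by
    ext m n m' n'
    simp [toDual_def, mul_comm]
  rw [LinearMap.separatingLeft_iff_linear_nontrivial, this]
  exact fun x => (LinearEquiv.map_eq_zero_iff _).1

theorem Nondegenerate.tmul [FiniteDimensional K M] [FiniteDimensional K N]
    (h₁ : B₁.Nondegenerate) (h₂ : B₂.Nondegenerate) : (B₁.tmul B₂).Nondegenerate :=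
  ⟨separatingLeft_tmul h₁ h₂, by
    rw [← LinearMap.flip_separatingLeft, flip_tmul]
    exact separatingLeft_tmul h₁.flip h₂.flip⟩

theorem separatingLeft_of_separatingLeft_tmul [Nontrivial M]
    (h : (B₁.tmul B₂).SeparatingLeft) : B₂.SeparatingLeft := by
  obtain ⟨m, hm⟩ := exists_ne (0 : M)
  intro n hn
  refine TensorProduct.eq_zero_of_tmul_eq_zero hm (h _ fun x => ?_)
  induction x using TensorProduct.induction_on with
  | zero => simp
  | tmul m' n' => simp [hn]
  | add x y hx hy => simp [hx, hy]

theorem tmul_nondegenerate_iff [FiniteDimensional K M] [FiniteDimensional K N] [Nontrivial M]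
    (h₁ : B₁.Nondegenerate) : (B₁.tmul B₂).Nondegenerate ↔ B₂.Nondegenerate := by
  refine ⟨fun h => ⟨separatingLeft_of_separatingLeft_tmul h.1, ?_⟩, h₁.tmul⟩
  have h' : (B₁.flip.tmul B₂.flip).SeparatingLeft := by
    rw [← flip_tmul, LinearMap.flip_separatingLeft]
    exact h.2
  exact LinearMap.flip_separatingLeft.1 (separatingLeft_of_separatingLeft_tmul h')

end LinearMap.BilinForm

section lTensorAut

variable {R : Type*} [CommSemiring R] (M : Type*) {N : Type*} [AddCommMonoid M] [Module R M]
  [AddCommMonoid N] [Module R N]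

noncomputable def lTensorAut : (N ≃ₗ[R] N) →* (M ⊗[R] N ≃ₗ[R] M ⊗[R] N) where
  toFun A := A.lTensor M
  map_one' := LinearEquiv.toLinearMap_injective (TensorProduct.ext' fun _ _ => rfl)
  map_mul' A B := LinearEquiv.lTensor_trans M A B

@[simp]
theorem lTensorAut_apply (A : N ≃ₗ[R] N) (m : M) (n : N) :
    lTensorAut M A (m ⊗ₜ n) = m ⊗ₜ A n :=
  rfl

end lTensorAut

theorem lTensorAut_injective {K M N : Type*} [Field K] [AddCommGroup M] [Module K M]
    [Nontrivial M] [AddCommGroup N] [Module K N] :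
    Function.Injective (lTensorAut M : (N ≃ₗ[K] N) →* (M ⊗[K] N ≃ₗ[K] M ⊗[K] N)) := by
  obtain ⟨m, hm⟩ := exists_ne (0 : M)
  refine fun A B h => LinearEquiv.ext fun n => ?_
  rw [← sub_eq_zero]
  refine TensorProduct.eq_zero_of_tmul_eq_zero (K := K) hm ?_
  rw [tmul_sub, ← lTensorAut_apply, ← lTensorAut_apply, h, sub_self]

theorem mem_formPreserver_iff_compl₁₂_eq {M : Type} [AddCommGroup M] [Module ℂ M]
    {B : BilinForm ℂ M} {g : M ≃ₗ[ℂ] M} : g ∈ formPreserver B ↔ B.compl₁₂ g g = B :=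
  ⟨fun hg => LinearMap.ext₂ hg, fun hg x y => LinearMap.ext_iff₂.1 hg x y⟩

theorem lTensorAut_mem_formPreserver_tmul_iff {M N : Type} [AddCommGroup M] [Module ℂ M]
    [AddCommGroup N] [Module ℂ N] {B₁ : BilinForm ℂ M} (hB₁ : B₁ ≠ 0) {B₂ : BilinForm ℂ N}
    {A : N ≃ₗ[ℂ] N} : lTensorAut M A ∈ formPreserver (B₁.tmul B₂) ↔ A ∈ formPreserver B₂ := by
  rw [mem_formPreserver_iff_compl₁₂_eq, mem_formPreserver_iff_compl₁₂_eq]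
  change (B₁.tmul B₂).compl₁₂ (A.toLinearMap.lTensor M) (A.toLinearMap.lTensor M) = _ ↔ _
  rw [LinearMap.BilinForm.tmul_compl₁₂_lTensor,
    (LinearMap.BilinForm.tmul_right_injective hB₁).eq_iff]

theorem lTensorAut_mem_commutant {G : Type} {M N : Type} [AddCommGroup M] [Module ℂ M]
    [AddCommGroup N] [Module ℂ N] (f : G → M →ₗ[ℂ] M) (A : N ≃ₗ[ℂ] N) :
    lTensorAut M A ∈ commutant fun g => (f g).rTensor N := fun _ x =>
  LinearMap.congr_fun ((LinearMap.lTensor_comp_rTensor _ _ _).trans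
    (LinearMap.rTensor_comp_lTensor _ _ _).symm) x

theorem apply_rep_eq_apply_rep_inv {G U : Type} [Group G] [AddCommGroup U] [Module ℂ U]
    {ρ : Representation ℂ G U} {B : BilinForm ℂ U} (hB : ∀ g x y, B (ρ g x) (ρ g y) = B x y)
    (g : G) (x y : U) : B (ρ g x) y = B x (ρ g⁻¹ y) := by
  rw [← hB g x (ρ g⁻¹ y), Representation.self_inv_apply]

namespace IsIrreducibleRep

variable {G : Type} [Group G] {U : Type} [AddCommGroup U] [Module ℂ U]
  {ρ : Representation ℂ G U}

theorem isIrreducible (h : IsIrreducibleRep ρ) : ρ.IsIrreducible :=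
  have := h.1
  { exists_pair_ne := ⟨⊥, ⊤, fun hbt => bot_ne_top (congrArg Subrepresentation.toSubmodule hbt)⟩
    eq_bot_or_eq_top := fun σ =>
      (h.2 σ.toSubmodule fun g _ hu => σ.apply_mem_toSubmodule g hu).imp
        (fun hσ => Subrepresentation.toSubmodule_injective hσ)
        (fun hσ => Subrepresentation.toSubmodule_injective hσ) }

variable [FiniteDimensional ℂ U]

theorem exists_eq_smul_id_of_commute (h : IsIrreducibleRep ρ)
    (T : U →ₗ[ℂ] U) (hT : ∀ g x, T (ρ g x) = ρ g (T x)) : ∃ c : ℂ, T = c • LinearMap.id := by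
  have := h.isIrreducible
  obtain ⟨c, hc⟩ :=
    Representation.IsIrreducible.algebraMap_intertwiningMap_bijective_of_isAlgClosed.2
      (T.intertwiningMap_of_isIntertwiningMap ρ ρ hT)
  refine ⟨c, LinearMap.ext fun x => ?_⟩
  simpa using (DFunLike.congr_fun hc x).symm

theorem exists_eq_smul_of_invariant (h : IsIrreducibleRep ρ) {B B' : BilinForm ℂ U}
    (hB : ∀ g x y, B (ρ g x) (ρ g y) = B x y) (hnd : B.Nondegenerate)
    (hB' : ∀ g x y, B' (ρ g x) (ρ g y) = B' x y) :
    ∃ c : ℂ, B' = c • B := by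
  set T := B'.symmCompOfNondegenerate B hnd
  have hT : ∀ g x, T (ρ g x) = ρ g (T x) := fun g x =>
    LinearMap.ker_eq_bot.1 hnd.ker_eq_bot <| LinearMap.ext fun y => calc
      B (T (ρ g x)) y = B' (ρ g x) y := B'.symmCompOfNondegenerate_left_apply hnd y _
      _ = B' x (ρ g⁻¹ y) := apply_rep_eq_apply_rep_inv hB' g x y
      _ = B (T x) (ρ g⁻¹ y) := (B'.symmCompOfNondegenerate_left_apply hnd _ x).symm
      _ = B (ρ g (T x)) y := (apply_rep_eq_apply_rep_inv hB g _ y).symm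
  obtain ⟨c, hc⟩ := h.exists_eq_smul_id_of_commute T hT
  refine ⟨c, LinearMap.ext₂ fun x y => ?_⟩
  calc B' x y = B (T x) y := (B'.symmCompOfNondegenerate_left_apply hnd y x).symm
    _ = (c • B) x y := by simp [hc]

theorem exists_eq_tmul_of_invariant (h : IsIrreducibleRep ρ) {BU : BilinForm ℂ U}
    (hinv : ∀ g x y, BU (ρ g x) (ρ g y) = BU x y) (hnd : BU.Nondegenerate)
    {W : Type} [AddCommGroup W] [Module ℂ W] (B : BilinForm ℂ (U ⊗[ℂ] W))
    (hB : ∀ g x y, B ((ρ g).rTensor W x) ((ρ g).rTensor W y) = B x y) :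
    ∃ C : BilinForm ℂ W, B = BU.tmul C := by
  have := h.1
  have hres : ∀ w w' : W, ∃ c : ℂ,
      B.compl₁₂ ((TensorProduct.mk ℂ U W).flip w) ((TensorProduct.mk ℂ U W).flip w') = c • BU :=
    fun w w' => h.exists_eq_smul_of_invariant hinv hnd fun g u v => by
      simpa using hB g (u ⊗ₜ w) (v ⊗ₜ w')
  choose c hc using hres
  have hc' : ∀ u v w w', B (u ⊗ₜ w) (v ⊗ₜ w') = c w w' * BU u v := fun u v w w' => by
    simpa using congr($(hc w w') u v)
  obtain ⟨u₀, v₀, hne⟩ := LinearMap.BilinForm.exists_apply_ne_zero hnd.ne_zero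
  -- `C` must be `c`, which is read off at a pair with `BU u₀ v₀ ≠ 0`.
  refine ⟨(BU u₀ v₀)⁻¹ • B.compl₁₂ (TensorProduct.mk ℂ U W u₀) (TensorProduct.mk ℂ U W v₀), ?_⟩
  refine TensorProduct.ext' fun u w => TensorProduct.ext' fun v w' => ?_
  simp only [LinearMap.BilinForm.tmul_apply_tmul, LinearMap.smul_apply, LinearMap.compl₁₂_apply,
    TensorProduct.mk_apply, hc', smul_eq_mul]
  field_simp

theorem exists_eq_tmul_of_commute (h : IsIrreducibleRep ρ) {ι : Type} [Fintype ι]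
    [DecidableEq ι] (T : U →ₗ[ℂ] U ⊗[ℂ] (ι → ℂ))
    (hT : ∀ g u, T (ρ g u) = (ρ g).rTensor (ι → ℂ) (T u)) :
    ∃ a : ι → ℂ, ∀ u, T u = u ⊗ₜ a := by
  let P := piScalarRight ℂ ℂ U ι
  have hcomp : ∀ i, ∃ c : ℂ, LinearMap.proj i ∘ₗ P.toLinearMap ∘ₗ T = c • LinearMap.id :=
    fun i => h.exists_eq_smul_id_of_commute _ fun g u => by
      simp [P, hT, TensorProduct.piScalarRight_rTensor]
  choose a ha using hcomp
  refine ⟨a, fun u => P.injective (funext fun i => ?_)⟩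
  simpa [P] using LinearMap.congr_fun (ha i) u

theorem exists_eq_lTensor_of_commute (h : IsIrreducibleRep ρ) {ι : Type} [Fintype ι]
    [DecidableEq ι] (g : U ⊗[ℂ] (ι → ℂ) →ₗ[ℂ] U ⊗[ℂ] (ι → ℂ))
    (hg : ∀ k x, g ((ρ k).rTensor (ι → ℂ) x) = (ρ k).rTensor (ι → ℂ) (g x)) :
    ∃ A : (ι → ℂ) →ₗ[ℂ] (ι → ℂ), g = A.lTensor U := by
  have := h.1
  obtain ⟨u₀, hu₀⟩ := exists_ne (0 : U)
  obtain ⟨f, hf⟩ := Module.Projective.exists_dual_eq_one ℂ hu₀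
  have hcol : ∀ w, ∃ a, ∀ u, g (u ⊗ₜ w) = u ⊗ₜ a := fun w =>
    h.exists_eq_tmul_of_commute (g ∘ₗ (TensorProduct.mk ℂ U (ι → ℂ)).flip w) fun k u => by
      simpa using hg k (u ⊗ₜ w)
  -- `A w` is read off from `g (u₀ ⊗ w) = u₀ ⊗ A w` by contracting with `f`.
  refine ⟨(TensorProduct.lid ℂ _).toLinearMap ∘ₗ f.rTensor _ ∘ₗ g ∘ₗ TensorProduct.mk ℂ U _ u₀,
    TensorProduct.ext' fun u w => ?_⟩
  obtain ⟨a, ha⟩ := hcol w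
  simp [ha, hf]

theorem exists_lTensorAut_eq_of_mem_commutant (h : IsIrreducibleRep ρ) {ι : Type} [Fintype ι]
    [DecidableEq ι] {g : U ⊗[ℂ] (ι → ℂ) ≃ₗ[ℂ] U ⊗[ℂ] (ι → ℂ)}
    (hg : g ∈ commutant fun k => (ρ k).rTensor (ι → ℂ)) :
    ∃ A, lTensorAut U A = g := by
  have := h.1
  obtain ⟨u₀, hu₀⟩ := exists_ne (0 : U)
  obtain ⟨A, hA⟩ := h.exists_eq_lTensor_of_commute g.toLinearMap hg
  have hinj : Function.Injective A := by
    refine (injective_iff_map_eq_zero A).2 fun w hw => ?_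
    refine TensorProduct.eq_zero_of_tmul_eq_zero (K := ℂ) hu₀ (g.map_eq_zero_iff.1 ?_)
    simpa [hw] using LinearMap.congr_fun hA (u₀ ⊗ₜ w)
  exact ⟨LinearEquiv.ofInjectiveEndo A hinj, LinearEquiv.toLinearMap_injective hA.symm⟩

theorem map_lTensorAut_formPreserver (h : IsIrreducibleRep ρ) {BU : BilinForm ℂ U}
    (hBU : BU ≠ 0) {ι : Type} [Fintype ι] [DecidableEq ι] (C : BilinForm ℂ (ι → ℂ)) :
    (formPreserver C).map (lTensorAut U) =
      formPreserver (BU.tmul C) ⊓ commutant fun k => (ρ k).rTensor (ι → ℂ) := by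
  ext g
  constructor
  · rintro ⟨A, hA, rfl⟩
    exact ⟨(lTensorAut_mem_formPreserver_tmul_iff hBU).2 hA, lTensorAut_mem_commutant _ A⟩
  · rintro ⟨hg, hgc⟩
    obtain ⟨A, rfl⟩ := h.exists_lTensorAut_eq_of_mem_commutant hgc
    exact ⟨A, (lTensorAut_mem_formPreserver_tmul_iff hBU).1 hg, rfl⟩

noncomputable def formPreserverEquivCentralizer (h : IsIrreducibleRep ρ) {BU : BilinForm ℂ U}
    (hBU : BU ≠ 0) {ι : Type} [Fintype ι] [DecidableEq ι] (C : BilinForm ℂ (ι → ℂ)) :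
    formPreserver C ≃*
      ↥(formPreserver (BU.tmul C) ⊓ commutant fun k => (ρ k).rTensor (ι → ℂ)) :=
  have := h.1
  ((formPreserver C).equivMapOfInjective _ lTensorAut_injective).trans
    (MulEquiv.subgroupCongr (h.map_lTensorAut_formPreserver hBU C))

end IsIrreducibleRep

/-- Let `U` be an irreducible representation of `G` carrying an invariant nondegenerate
alternating form `B_U`, and let `V = U ⊗ ℂ^m` with `G` acting on the first factor.
Then: every `G`-invariant bilinear form on `V` equals `B_U ⊗ C` for a unique bilinear
form `C` on `ℂ^m`; `B_U ⊗ C` is alternating and nondegenerate iff `C` is symmetric and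
nondegenerate; and in that case the centralizer of the image of `G` in
`Sp(V, B_U ⊗ C)` is isomorphic to the orthogonal group of `(ℂ^m, C)`. -/
theorem invariant_forms_on_isotypic_and_centralizer
    (G : Type) [Group G] (U : Type) [AddCommGroup U] [Module ℂ U]
    [FiniteDimensional ℂ U]
    (ρU : Representation ℂ G U) (hirr : IsIrreducibleRep ρU)
    (BU : LinearMap.BilinForm ℂ U)
    (hinv : ∀ (g : G) (x y : U), BU (ρU g x) (ρU g y) = BU x y)
    (halt : BU.IsAlt) (hnd : BU.Nondegenerate) (m : ℕ) :
    (∀ B : LinearMap.BilinForm ℂ (U ⊗[ℂ] (Fin m → ℂ)),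
      (∀ (g : G) (x y : U ⊗[ℂ] (Fin m → ℂ)),
        B (LinearMap.rTensor (Fin m → ℂ) (ρU g) x)
          (LinearMap.rTensor (Fin m → ℂ) (ρU g) y) = B x y) →
      ∃! C : LinearMap.BilinForm ℂ (Fin m → ℂ), B = BU.tmul C) ∧
    (∀ C : LinearMap.BilinForm ℂ (Fin m → ℂ),
      ((BU.tmul C).IsAlt ∧ (BU.tmul C).Nondegenerate) ↔
        (C.IsSymm ∧ C.Nondegenerate)) ∧
    (∀ C : LinearMap.BilinForm ℂ (Fin m → ℂ), C.IsSymm → C.Nondegenerate →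
      Nonempty
        ((formPreserver (BU.tmul C) ⊓
            commutant (fun g : G => LinearMap.rTensor (Fin m → ℂ) (ρU g)) :
          Subgroup ((U ⊗[ℂ] (Fin m → ℂ)) ≃ₗ[ℂ] (U ⊗[ℂ] (Fin m → ℂ)))) ≃*
          formPreserver C)) := by
  have := hirr.1
  have hBU : BU ≠ 0 := hnd.ne_zero
  refine ⟨fun B hB => ?_, fun C => and_congr
    (LinearMap.BilinForm.tmul_isAlt_iff halt hBU) (LinearMap.BilinForm.tmul_nondegenerate_iff hnd),
    fun C _ _ => ⟨(hirr.formPreserverEquivCentralizer hBU C).symm⟩⟩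
  obtain ⟨C, rfl⟩ := hirr.exists_eq_tmul_of_invariant hinv hnd B hB
  exact ⟨C, rfl, fun C' hC' => LinearMap.BilinForm.tmul_right_injective hBU hC'.symm⟩
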